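/- arXiv:2203.12903 — 2 statements merged into one kernel-verified Lean document; each statement's English description precedes it below -/
import Mathlib

section
/- Let G be a finite set of LTL formulas with |G| > 2 and Dom a domain formula. If φ satisfies the logical-inconsistency condition (Dom ∧ ⋀G ∧ φ unsatisfiable) and the minimality condition (Dom ∧ ⋀(G\{g}) ∧ φ satisfiable for every g ∈ G) with respect to G under Dom, then there exists a two-element subset G' ⊆ G such that φ satisfies the logical-inconsistency and minimality conditions with respect to G' under the extended domain Dom ∧ ⋀(G \ G'). -/
/-
Every goal of G outside G' is moved into the domain, so for any G' ⊆ G the formula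
Dom ∧ ⋀(G \ G') ∧ ⋀G' ∧ φ is equivalent to Dom ∧ ⋀G ∧ φ, and removing g ∈ G' from G' amounts
to removing it from G. Both conditions therefore transfer verbatim to any subset G' of G, in
particular to a two-element one.
-/

open Classical

abbrev Trace (AP : Type*) := ℕ → Set AP
abbrev LTLFormula (AP : Type*) := Trace AP → Prop
def Satisfiable {AP : Type*} (φ : LTLFormula AP) : Prop := ∃ σ, φ σ

theorem Finset.forall_mem_sdiff_and_forall_mem_iff {α : Type*} [DecidableEq α] {s t : Finset α}
    (hts : t ⊆ s) (p : α → Prop) : ((∀ x ∈ s \ t, p x) ∧ ∀ x ∈ t, p x) ↔ ∀ x ∈ s, p x := by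
  rw [← Finset.forall_mem_union, Finset.sdiff_union_of_subset hts]

theorem Finset.erase_sdiff_erase_of_mem {α : Type*} [DecidableEq α] {s t : Finset α} {a : α}
    (ha : a ∈ t) : s.erase a \ t.erase a = s \ t := by
  ext x
  by_cases hx : x = a <;> simp_all

namespace BoundaryCondition

variable {AP : Type*}

def extendDomain (Dom : LTLFormula AP) (H : Finset (LTLFormula AP)) : LTLFormula AP :=
  fun σ => Dom σ ∧ ∀ g ∈ H, g σ

def LogicallyInconsistent (Dom : LTLFormula AP) (G : Finset (LTLFormula AP))
    (φ : LTLFormula AP) : Prop :=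
  ¬ Satisfiable fun σ => Dom σ ∧ (∀ g ∈ G, g σ) ∧ φ σ

def SatisfiesMinimality (Dom : LTLFormula AP) (G : Finset (LTLFormula AP))
    (φ : LTLFormula AP) : Prop :=
  ∀ g ∈ G, Satisfiable fun σ => Dom σ ∧ (∀ g' ∈ G.erase g, g' σ) ∧ φ σ

variable {Dom φ : LTLFormula AP} {G G' : Finset (LTLFormula AP)}

theorem extendDomain_sdiff_and_iff (hG' : G' ⊆ G) (σ : Trace AP) :
    (extendDomain Dom (G \ G') σ ∧ (∀ g ∈ G', g σ) ∧ φ σ) ↔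
      Dom σ ∧ (∀ g ∈ G, g σ) ∧ φ σ := by
  rw [extendDomain, ← Finset.forall_mem_sdiff_and_forall_mem_iff hG']
  tauto

theorem LogicallyInconsistent.extendDomain_sdiff (hG' : G' ⊆ G)
    (h : LogicallyInconsistent Dom G φ) :
    LogicallyInconsistent (extendDomain Dom (G \ G')) G' φ :=
  fun ⟨σ, hσ⟩ => h ⟨σ, (extendDomain_sdiff_and_iff hG' σ).mp hσ⟩

theorem SatisfiesMinimality.extendDomain_sdiff (hG' : G' ⊆ G)
    (h : SatisfiesMinimality Dom G φ) :
    SatisfiesMinimality (extendDomain Dom (G \ G')) G' φ := by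
  intro g hg
  obtain ⟨σ, hσ⟩ := h g (hG' hg)
  refine ⟨σ, ?_⟩
  rw [← Finset.erase_sdiff_erase_of_mem hg]
  exact (extendDomain_sdiff_and_iff (Finset.erase_subset_erase g hG') σ).mpr hσ

end BoundaryCondition

open BoundaryCondition in
/-- BC reduction: if φ satisfies logical inconsistency and
minimality for a goal set G with |G| > 2 under Dom, then there is a
two-element subset G' ⊆ G such that φ satisfies both conditions for G'
under the extended domain Dom ∧ ⋀(G \ G'). -/
theorem stmt4 {AP : Type*} (G : Finset (LTLFormula AP))
    (hG : G.card > 2) (Dom φ : LTLFormula AP)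
    (hunsat : ¬ Satisfiable (fun σ => Dom σ ∧ (∀ g ∈ G, g σ) ∧ φ σ))
    (hmin : ∀ g ∈ G,
      Satisfiable (fun σ => Dom σ ∧ (∀ g' ∈ G.erase g, g' σ) ∧ φ σ)) :
    ∃ G' ⊆ G, G'.card = 2 ∧
      (¬ Satisfiable (fun σ =>
          (Dom σ ∧ ∀ g ∈ G \ G', g σ) ∧ (∀ g ∈ G', g σ) ∧ φ σ)) ∧
      (∀ g ∈ G', Satisfiable (fun σ =>
          (Dom σ ∧ ∀ g' ∈ G \ G', g' σ) ∧ (∀ g' ∈ G'.erase g, g' σ) ∧ φ σ)) := by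
  obtain ⟨G', hG'G, hcard⟩ := Finset.exists_subset_card_eq (show 2 ≤ G.card by omega)
  exact ⟨G', hG'G, hcard,
    LogicallyInconsistent.extendDomain_sdiff hG'G hunsat,
    SatisfiesMinimality.extendDomain_sdiff hG'G hmin⟩
end

section
/- Two trace formulas φ1, φ2 of the same length n admit a synthesis if and only if: each pairwise conjunction p_i¹ ∧ p_i² is satisfiable for all positions i except exactly one position j at which p_j¹ and p_j² differ in exactly one complementary literal and fuse(p_j¹, p_j²) is satisfiable. In this case the synthesis, when it exists, is unique up to semantic equivalence at each position. -/
/-- A conjunction of literals, each literal being an atom with a polarity. -/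
abbrev LitConj (AP : Type*) := List (AP × Bool)

/-- A state `s` satisfies a conjunction of literals `c`. -/
def SatConj {AP : Type*} (c : LitConj AP) (s : Set AP) : Prop :=
  ∀ l ∈ c, (l.1 ∈ s ↔ l.2 = true)

/-- Satisfaction of the trace formula
`⋀_{0 ≤ i ≤ n} X^i (p i) ∧ X^{n+1} G (p (n+1))` by a trace `σ`. -/
def TSat {AP : Type*} (n : ℕ) (p : ℕ → LitConj AP) (σ : Trace AP) : Prop :=
  (∀ i ≤ n, SatConj (p i) (σ i)) ∧ ∀ k ≥ n + 1, SatConj (p (n + 1)) (σ k)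

/-- `fuse (p1 ∧ a) (p2 ∧ ¬a) = p1 ∧ p2`: drop the complementary literals over `a`. -/
def fuse {AP : Type*} [DecidableEq AP] (c1 c2 : LitConj AP) (a : AP) : LitConj AP :=
  c1.filter (fun l => decide (l.1 ≠ a)) ++ c2.filter (fun l => decide (l.1 ≠ a))

/-- `c1` and `c2` differ in exactly one complementary literal, over the atom `a`:
`c1` contains `a`, `c2` contains `¬a`, and they agree on all other literals. -/
def DiffOne {AP : Type*} (c1 c2 : LitConj AP) (a : AP) : Prop :=
  (a, true) ∈ c1 ∧ (a, false) ∈ c2 ∧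
    ∀ l : AP × Bool, l.1 ≠ a → (l ∈ c1 ↔ l ∈ c2)

/-- `p` is a synthesis of the trace formulas (of length `n`) given by `p1` and `p2`:
at exactly one position `j` the two differ in one complementary literal and are fused,
at all other positions they are conjoined, and every resulting position is satisfiable. -/
def IsSynthesis {AP : Type*} [DecidableEq AP]
    (n : ℕ) (p1 p2 p : ℕ → LitConj AP) : Prop :=
  ∃ j ≤ n + 1, ∃ a : AP,
    DiffOne (p1 j) (p2 j) a ∧ p j = fuse (p1 j) (p2 j) a ∧
    (∀ i ≤ n + 1, i ≠ j → p i = p1 i ++ p2 i) ∧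
    (∀ i ≤ n + 1, ∃ s : Set AP, SatConj (p i) s)

/-! A satisfiable conjunction never contains both literals over one atom. Hence at the fusion
position `j` of a synthesis the plain conjunction `p_j¹ ∧ p_j²` is unsatisfiable, which pins
down `j`; and if `p_j¹, p_j²` differed in one complementary literal over two atoms `a ≠ b`, the
literal `b` would also lie in `p_j²` next to `¬b`, making `fuse(p_j¹, p_j²)` over `a`
unsatisfiable, which pins down the fused atom. So a synthesis is even unique syntactically. -/

section Synthesis

variable {AP : Type*}

theorem not_satConj_of_mem_of_mem {c : LitConj AP} {x : AP} {s : Set AP}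
    (ht : (x, true) ∈ c) (hf : (x, false) ∈ c) : ¬ SatConj c s := fun h =>
  absurd ((h _ ht).mpr rfl) (by simpa using h _ hf)

theorem DiffOne.not_satConj_append {c1 c2 : LitConj AP} {a : AP} (hd : DiffOne c1 c2 a)
    (s : Set AP) : ¬ SatConj (c1 ++ c2) s :=
  not_satConj_of_mem_of_mem (List.mem_append_left _ hd.1) (List.mem_append_right _ hd.2.1)

theorem DiffOne.eq_of_satConj_fuse [DecidableEq AP] {c1 c2 : LitConj AP} {a b : AP}
    (ha : DiffOne c1 c2 a) (hb : DiffOne c1 c2 b) {s : Set AP}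
    (hs : SatConj (fuse c1 c2 a) s) : a = b := by
  by_contra hab
  have hkeep : ∀ l ∈ c2, l.1 = b → l ∈ fuse c1 c2 a := fun l hl hlb =>
    List.mem_append_right _ (List.mem_filter.mpr ⟨hl, by simpa [hlb] using Ne.symm hab⟩)
  exact not_satConj_of_mem_of_mem (hkeep _ ((ha.2.2 (b, true) (Ne.symm hab)).mp hb.1) rfl)
    (hkeep _ hb.2.1 rfl) hs

variable [DecidableEq AP] {n : ℕ} {p1 p2 : ℕ → LitConj AP}

theorem exists_isSynthesis_iff :
    (∃ p, IsSynthesis n p1 p2 p) ↔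
      ∃ j ≤ n + 1,
        (∃ a : AP, DiffOne (p1 j) (p2 j) a ∧
          ∃ s : Set AP, SatConj (fuse (p1 j) (p2 j) a) s) ∧
        ∀ i ≤ n + 1, i ≠ j → ∃ s : Set AP, SatConj (p1 i ++ p2 i) s := by
  constructor
  · rintro ⟨p, j, hj, a, hd, hpj, hp, hsat⟩
    exact ⟨j, hj, ⟨a, hd, hpj ▸ hsat j hj⟩, fun i hi hij => hp i hi hij ▸ hsat i hi⟩
  · rintro ⟨j, hj, ⟨a, hd, hfuse⟩, hsat⟩
    refine ⟨Function.update (fun i => p1 i ++ p2 i) j (fuse (p1 j) (p2 j) a), j, hj, a, hd,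
      by simp, fun i _ hij => by simp [hij], fun i hi => ?_⟩
    by_cases hij : i = j
    · subst hij; simpa using hfuse
    · simpa [hij] using hsat i hi hij

theorem IsSynthesis.eq {p p' : ℕ → LitConj AP} (h : IsSynthesis n p1 p2 p)
    (h' : IsSynthesis n p1 p2 p') : ∀ i ≤ n + 1, p i = p' i := by
  obtain ⟨j, hj, a, hd, hpj, hp, hsat⟩ := h
  obtain ⟨j', hj', a', hd', hpj', hp', hsat'⟩ := h'
  obtain rfl : j = j' := by
    by_contra hjj
    obtain ⟨s, hs⟩ := hsat' j hj
    exact hd.not_satConj_append s (hp' j hj hjj ▸ hs)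
  obtain rfl : a = a' := by
    obtain ⟨s, hs⟩ := hsat j hj
    exact hd.eq_of_satConj_fuse hd' (hpj ▸ hs)
  intro i hi
  by_cases hij : i = j
  · rw [hij, hpj, hpj']
  · rw [hp i hi hij, hp' i hi hij]

end Synthesis

theorem stmt17_general {AP : Type*} [DecidableEq AP]
    (n : ℕ) (p1 p2 : ℕ → LitConj AP) :
    ((∃ p : ℕ → LitConj AP, IsSynthesis n p1 p2 p) ↔
      ∃ j ≤ n + 1,
        (∃ a : AP, DiffOne (p1 j) (p2 j) a ∧
          ∃ s : Set AP, SatConj (fuse (p1 j) (p2 j) a) s) ∧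
        ∀ i ≤ n + 1, i ≠ j → ∃ s : Set AP, SatConj (p1 i ++ p2 i) s) ∧
    (∀ p p' : ℕ → LitConj AP,
      IsSynthesis n p1 p2 p → IsSynthesis n p1 p2 p' →
      ∀ i ≤ n + 1, ∀ s : Set AP, SatConj (p i) s ↔ SatConj (p' i) s) :=
  ⟨exists_isSynthesis_iff, fun _ _ h h' i hi _ => by rw [h.eq h' i hi]⟩

/-- two trace formulas of the same length n (with no repeated
atoms at each position) admit a synthesis iff the positionwise conjunctions
p_i¹ ∧ p_i² are satisfiable at all positions except exactly one position j,
at which the two differ in exactly one complementary literal and the fused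
conjunction is satisfiable; moreover the synthesis is unique up to semantic
equivalence at each position. -/
theorem stmt17 {AP : Type*} [DecidableEq AP]
    (n : ℕ) (p1 p2 : ℕ → LitConj AP)
    (hnodup1 : ∀ i ≤ n + 1, ((p1 i).map Prod.fst).Nodup)
    (hnodup2 : ∀ i ≤ n + 1, ((p2 i).map Prod.fst).Nodup) :
    ((∃ p : ℕ → LitConj AP, IsSynthesis n p1 p2 p) ↔
      ∃ j ≤ n + 1,
        (∃ a : AP, DiffOne (p1 j) (p2 j) a ∧
          ∃ s : Set AP, SatConj (fuse (p1 j) (p2 j) a) s) ∧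
        ∀ i ≤ n + 1, i ≠ j → ∃ s : Set AP, SatConj (p1 i ++ p2 i) s) ∧
    (∀ p p' : ℕ → LitConj AP,
      IsSynthesis n p1 p2 p → IsSynthesis n p1 p2 p' →
      ∀ i ≤ n + 1, ∀ s : Set AP, SatConj (p i) s ↔ SatConj (p' i) s) :=
  stmt17_general n p1 p2
end
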